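/- Define the entire function G(z) = G(0) − ∫_0^z sin²(πs)/(π²·s·(s+1)²) ds, where G(0) = −∫_{−∞}^{0} sin²(πu)/(π²·u·(u+1)²) du, the integral from 0 to z is along the straight segment, and the integrand extends to an entire function of s. Then there exists a constant C > 0 such that |G(z)| ≤ C·|z|·e^{2π·|Im z|} for all z ∈ ℂ with |z| ≥ 1; in particular G has exponential type at most 2π. -/

import Mathlib

/-!
Since `‖sin w‖ ≤ e^{|Im w|}` and the denominator `π² s (s+1)²` has norm at least `1` once
`‖s‖ ≥ 2`, the integrand is bounded by `e^{2π|Im s|}` there, hence by `M e^{2π|Im s|}` on all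
of `ℂ` by compactness of the disc. On the segment `[0, z]` the imaginary part never exceeds
`|Im z|` in absolute value, so `‖G z‖ ≤ K + M ‖z‖ e^{2π|Im z|}`, which gives both claims.
-/

open MeasureTheory Real Set

/-- `F` has exponential type at most `τ`. -/
def HasExpTypeLE (τ : ℝ) (F : ℂ → ℂ) : Prop :=
  ∀ ε > 0, ∃ C > 0, ∀ z : ℂ, ‖F z‖ ≤ C * Real.exp ((τ + ε) * ‖z‖)

theorem Complex.norm_sin_le_exp_abs_im (w : ℂ) : ‖Complex.sin w‖ ≤ Real.exp |w.im| := by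
  have h₁ : ‖Complex.exp (-w * Complex.I)‖ ≤ Real.exp |w.im| := by
    rw [Complex.norm_exp]; simpa using le_abs_self w.im
  have h₂ : ‖Complex.exp (w * Complex.I)‖ ≤ Real.exp |w.im| := by
    rw [Complex.norm_exp]; simpa using neg_le_abs w.im
  calc ‖Complex.sin w‖
      = ‖Complex.exp (-w * Complex.I) - Complex.exp (w * Complex.I)‖ / 2 := by
        simp [Complex.sin]
    _ ≤ (Real.exp |w.im| + Real.exp |w.im|) / 2 := by
        gcongr; exact (norm_sub_le _ _).trans (add_le_add h₁ h₂)
    _ = Real.exp |w.im| := by ring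

lemma norm_sin_sq_div_le_exp {w : ℂ} (hw : 2 ≤ ‖w‖) :
    ‖Complex.sin ((π : ℂ) * w) ^ 2 / ((π : ℂ) ^ 2 * w * (w + 1) ^ 2)‖ ≤
      Real.exp (2 * π * |w.im|) := by
  have hsin : ‖Complex.sin ((π : ℂ) * w)‖ ^ 2 ≤ Real.exp (2 * π * |w.im|) := by
    have h := Complex.norm_sin_le_exp_abs_im ((π : ℂ) * w)
    rw [Complex.im_ofReal_mul, abs_mul, abs_of_pos pi_pos] at h
    calc ‖Complex.sin ((π : ℂ) * w)‖ ^ 2 ≤ Real.exp (π * |w.im|) ^ 2 := by gcongr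
      _ = Real.exp (2 * π * |w.im|) := by rw [← Real.exp_nat_mul]; ring_nf
  have hden : 1 ≤ ‖(π : ℂ) ^ 2 * w * (w + 1) ^ 2‖ := by
    have hπ : 1 ≤ π ^ 2 := one_le_pow₀ (by linarith [pi_gt_three])
    have hw1 : 1 ≤ ‖w + 1‖ := by
      have := norm_sub_norm_le w (-1)
      rw [norm_neg, norm_one, sub_neg_eq_add] at this
      linarith
    rw [norm_mul, norm_mul, norm_pow, norm_pow, Complex.norm_real, norm_of_nonneg pi_pos.le]
    exact one_le_mul_of_one_le_of_one_le
      (one_le_mul_of_one_le_of_one_le hπ (by linarith)) (one_le_pow₀ hw1)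
  rw [norm_div, norm_pow]
  exact div_le_of_le_mul₀ (by positivity) (by positivity)
    (hsin.trans (le_mul_of_one_le_right (exp_nonneg _) hden))

lemma exists_norm_le_mul_exp_of_eq_sin_sq_div {g : ℂ → ℂ} (hg : Continuous g)
    (hgeq : ∀ s : ℂ, s ≠ 0 → s ≠ -1 →
      g s = Complex.sin ((π : ℂ) * s) ^ 2 / ((π : ℂ) ^ 2 * s * (s + 1) ^ 2)) :
    ∃ M ≥ 0, ∀ w : ℂ, ‖g w‖ ≤ M * Real.exp (2 * π * |w.im|) := by
  obtain ⟨M, hM⟩ := (isCompact_closedBall (0 : ℂ) 2).exists_bound_of_continuousOn hg.continuousOn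
  refine ⟨max M 1, by positivity, fun w => ?_⟩
  have hexp : 1 ≤ Real.exp (2 * π * |w.im|) := one_le_exp (by positivity)
  rcases le_or_gt ‖w‖ 2 with hw | hw
  · calc ‖g w‖ ≤ M := hM w (by simpa using hw)
      _ ≤ max M 1 := le_max_left _ _
      _ ≤ max M 1 * Real.exp (2 * π * |w.im|) := le_mul_of_one_le_right (by positivity) hexp
  · have hw0 : w ≠ 0 := by rintro rfl; norm_num at hw
    have hw1 : w ≠ -1 := by rintro rfl; norm_num at hw
    rw [hgeq w hw0 hw1]
    exact (norm_sin_sq_div_le_exp hw.le).trans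
      (le_mul_of_one_le_left (exp_nonneg _) (le_max_right _ _))

lemma norm_integral_segment_le {g : ℂ → ℂ} {M a : ℝ} (hM : 0 ≤ M) (ha : 0 ≤ a)
    (hg : ∀ w : ℂ, ‖g w‖ ≤ M * Real.exp (a * |w.im|)) (z : ℂ) :
    ‖∫ t in (0 : ℝ)..1, z * g ((t : ℂ) * z)‖ ≤ M * ‖z‖ * Real.exp (a * |z.im|) := by
  have h := intervalIntegral.norm_integral_le_of_norm_le_const
    (f := fun t : ℝ => z * g ((t : ℂ) * z)) (a := 0) (b := 1)
    (C := ‖z‖ * (M * Real.exp (a * |z.im|)))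
    fun t ht => by
      rw [uIoc_of_le zero_le_one] at ht
      have him : |((t : ℂ) * z).im| ≤ |z.im| := by
        rw [Complex.im_ofReal_mul, abs_mul, abs_of_pos ht.1]
        exact mul_le_of_le_one_left (abs_nonneg _) ht.2
      rw [norm_mul]
      gcongr
      exact (hg _).trans (by gcongr)
  simpa [mul_comm, mul_left_comm, mul_assoc] using h

section Growth

variable {F : ℂ → ℂ} {K M a : ℝ}

lemma exists_norm_le_mul_norm_mul_exp (hK : 0 ≤ K) (hM : 0 ≤ M) (ha : 0 ≤ a)
    (hF : ∀ z, ‖F z‖ ≤ K + M * ‖z‖ * Real.exp (a * |z.im|)) :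
    ∃ C > 0, ∀ z : ℂ, 1 ≤ ‖z‖ → ‖F z‖ ≤ C * ‖z‖ * Real.exp (a * |z.im|) := by
  refine ⟨K + M + 1, by positivity, fun z hz => ?_⟩
  have hexp : 1 ≤ Real.exp (a * |z.im|) := one_le_exp (by positivity)
  have h1 : 1 ≤ ‖z‖ * Real.exp (a * |z.im|) := one_le_mul_of_one_le_of_one_le hz hexp
  calc ‖F z‖ ≤ K + M * ‖z‖ * Real.exp (a * |z.im|) := hF z
    _ ≤ (K + M + 1) * ‖z‖ * Real.exp (a * |z.im|) := by nlinarith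

lemma hasExpTypeLE_of_norm_le (hK : 0 ≤ K) (hM : 0 ≤ M) (ha : 0 ≤ a)
    (hF : ∀ z, ‖F z‖ ≤ K + M * ‖z‖ * Real.exp (a * |z.im|)) :
    HasExpTypeLE a F := by
  intro ε hε
  refine ⟨K + M / ε + 1, by positivity, fun z => ?_⟩
  set E := Real.exp ((a + ε) * ‖z‖) with hE_def
  have hE : 1 ≤ E := one_le_exp (by positivity)
  -- `‖z‖ ≤ e^{ε‖z‖}/ε` absorbs the polynomial factor into the extra `ε` of the type
  have hz : ‖z‖ * Real.exp (a * |z.im|) ≤ E / ε := by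
    rw [le_div_iff₀ hε, hE_def, add_mul, exp_add]
    have h₁ : ε * ‖z‖ ≤ Real.exp (ε * ‖z‖) := by linarith [add_one_le_exp (ε * ‖z‖)]
    have h₂ : Real.exp (a * |z.im|) ≤ Real.exp (a * ‖z‖) := by
      gcongr; exact Complex.abs_im_le_norm z
    calc ‖z‖ * Real.exp (a * |z.im|) * ε = Real.exp (a * |z.im|) * (ε * ‖z‖) := by ring
      _ ≤ Real.exp (a * ‖z‖) * Real.exp (ε * ‖z‖) := by gcongr
  calc ‖F z‖ ≤ K + M * (‖z‖ * Real.exp (a * |z.im|)) := by linarith [hF z]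
    _ ≤ K * E + M * (E / ε) := by gcongr; exact le_mul_of_one_le_right hK hE
    _ ≤ (K + M / ε + 1) * E := by
      linarith [show (K + M / ε + 1) * E = K * E + M * (E / ε) + E by ring]

end Growth

theorem stmt_9
    -- `g` is the entire extension of `s ↦ sin²(πs)/(π²·s·(s+1)²)`
    (g : ℂ → ℂ) (hg : Differentiable ℂ g)
    (hgeq : ∀ s : ℂ, s ≠ 0 → s ≠ -1 →
      g s = Complex.sin ((π : ℂ) * s) ^ 2 / ((π : ℂ) ^ 2 * s * (s + 1) ^ 2))
    -- `G z = G(0) - ∫_{[0,z]} g`, where `G(0) = -∫_{-∞}^0 g(u) du` and the segment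
    -- integral is parametrized by `t ↦ t·z`
    (G : ℂ → ℂ)
    (hG : ∀ z : ℂ, G z =
      (-∫ u in Iic (0 : ℝ), g (u : ℂ)) - ∫ t in (0:ℝ)..1, z * g ((t : ℂ) * z)) :
    (∃ C > 0, ∀ z : ℂ, 1 ≤ ‖z‖ →
      ‖G z‖ ≤ C * ‖z‖ * Real.exp (2 * π * |z.im|)) ∧
      HasExpTypeLE (2 * π) G := by
  obtain ⟨M, hM, hgM⟩ := exists_norm_le_mul_exp_of_eq_sin_sq_div hg.continuous hgeq
  have hGle : ∀ z, ‖G z‖ ≤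
      ‖∫ u in Iic (0 : ℝ), g (u : ℂ)‖ + M * ‖z‖ * Real.exp (2 * π * |z.im|) := fun z => by
    rw [hG z, ← norm_neg (∫ u in Iic (0 : ℝ), g (u : ℂ))]
    exact (norm_sub_le _ _).trans
      (add_le_add_right (norm_integral_segment_le hM (by positivity) hgM z) _)
  exact ⟨exists_norm_le_mul_norm_mul_exp (norm_nonneg _) hM (by positivity) hGle,
    hasExpTypeLE_of_norm_le (norm_nonneg _) hM (by positivity) hGle⟩
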